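/- Let F and Ǧ be asymmetric norms on ℝⁿ such that F is strongly convex with respect to Ǧ, and suppose the function α ↦ F_*(α)² is differentiable on all of ℝⁿ. Then the gradient map α ↦ ∇(F_*²)(α) is Lipschitz: there exists a constant L > 0 such that ‖∇(F_*²)(α₁) − ∇(F_*²)(α₂)‖ ≤ L‖α₁ − α₂‖ for all α₁, α₂ ∈ ℝⁿ, where ‖·‖ is the Euclidean norm. -/

import Mathlib

open scoped RealInnerProductSpace

/-- `ℝⁿ` with the Euclidean inner product. -/
abbrev En (n : ℕ) := EuclideanSpace ℝ (Fin n)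

/-- An asymmetric norm on `ℝⁿ`. -/
def IsAsymNorm {n : ℕ} (F : En n → ℝ) : Prop :=
  (∀ y, 0 ≤ F y) ∧ (∀ y, F y = 0 ↔ y = 0) ∧
  (∀ l : ℝ, 0 < l → ∀ y, F (l • y) = l * F y) ∧
  (∀ y₁ y₂, F (y₁ + y₂) ≤ F y₁ + F y₂)

/-- The dual asymmetric norm `F_*(α) = sup {⟨α, y⟩ : F y ≤ 1}`. -/
noncomputable def dualNorm {n : ℕ} (F : En n → ℝ) (α : En n) : ℝ :=
  sSup ((fun y => ⟪α, y⟫) '' {y | F y ≤ 1})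

/-- The subdifferential of `F²` at `y`. -/
def subdiffSq {n : ℕ} (F : En n → ℝ) (y : En n) : Set (En n) :=
  {α | ∀ z, (F y) ^ 2 + ⟪α, z - y⟫ ≤ (F z) ^ 2}

/-- `F` is strongly convex with respect to `G`. -/
def StronglyConvexWrt {n : ℕ} (F G : En n → ℝ) : Prop :=
  ∀ y z α, α ∈ subdiffSq F y → (F y) ^ 2 + ⟪α, z - y⟫ + (G (z - y)) ^ 2 ≤ (F z) ^ 2

/-!
`F_*²/4` is the convex conjugate of `F²`: `⟪α, y⟫ - F(y)² ≤ F_*(α)²/4`, with equality at some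
`y_α`, which then satisfies `α ∈ ∂F²(y_α)`. Since `β ↦ F_*(β)² - 4⟪β, y_α⟫` is minimal at `α`,
`∇(F_*²)(α) = 4 y_α`. Adding the strong convexity inequalities at `y_{α₁}` and `y_{α₂}` gives
`2c²‖y₁ - y₂‖² ≤ ⟪α₁ - α₂, y₁ - y₂⟫`, where `c‖·‖ ≤ G`, so `α ↦ y_α` is `1/(2c²)`-Lipschitz.
-/

theorem HasGradientAt.eq_of_isLocalMin_sub_inner {E : Type*} [NormedAddCommGroup E]
    [InnerProductSpace ℝ E] [CompleteSpace E] {f : E → ℝ} {f' v x : E}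
    (hf : HasGradientAt f f' x) (hmin : IsLocalMin (fun y => f y - ⟪v, y⟫) x) : f' = v := by
  have hv : HasFDerivAt (fun y => ⟪v, y⟫) (InnerProductSpace.toDual ℝ E v) x :=
    (InnerProductSpace.toDual ℝ E v).hasFDerivAt
  have hzero := hmin.hasFDerivAt_eq_zero ((hasGradientAt_iff_hasFDerivAt.mp hf).sub hv)
  exact (InnerProductSpace.toDual ℝ E).injective (sub_eq_zero.mp hzero)

theorem mul_norm_le_norm_of_mul_norm_sq_le_inner {E : Type*} [NormedAddCommGroup E]
    [InnerProductSpace ℝ E] {k : ℝ} {a y : E} (h : k * ‖y‖ ^ 2 ≤ ⟪a, y⟫) :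
    k * ‖y‖ ≤ ‖a‖ := by
  rcases (norm_nonneg y).eq_or_lt with hy | hy
  · rw [← hy, mul_zero]
    exact norm_nonneg a
  · have := h.trans (real_inner_le_norm a y)
    nlinarith

namespace IsAsymNorm

variable {n : ℕ} {F : En n → ℝ}

theorem map_zero (hF : IsAsymNorm F) : F 0 = 0 := (hF.2.1 0).mpr rfl

theorem pos_of_ne_zero (hF : IsAsymNorm F) {y : En n} (hy : y ≠ 0) : 0 < F y :=
  (hF.1 y).lt_of_ne fun h => hy ((hF.2.1 y).mp h.symm)

theorem convexOn (hF : IsAsymNorm F) : ConvexOn ℝ Set.univ F := by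
  refine ⟨convex_univ, fun x _ y _ a b ha hb hab => ?_⟩
  rcases ha.eq_or_lt with rfl | ha
  · simp [show b = 1 by linarith]
  rcases hb.eq_or_lt with rfl | hb
  · simp [show a = 1 by linarith]
  calc F (a • x + b • y) ≤ F (a • x) + F (b • y) := hF.2.2.2 _ _
    _ = a * F x + b * F y := by rw [hF.2.2.1 a ha x, hF.2.2.1 b hb y]

theorem continuous (hF : IsAsymNorm F) : Continuous F :=
  continuousOn_univ.mp (hF.convexOn.continuousOn isOpen_univ)

theorem exists_pos_le_on_sphere (hF : IsAsymNorm F) :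
    ∃ c > (0 : ℝ), ∀ u ∈ Metric.sphere (0 : En n) 1, c ≤ F u := by
  rcases (Metric.sphere (0 : En n) 1).eq_empty_or_nonempty with h | h
  · exact ⟨1, one_pos, by simp [h]⟩
  obtain ⟨m, hm, hmin⟩ := (isCompact_sphere (0 : En n) 1).exists_isMinOn h
    hF.continuous.continuousOn
  exact ⟨F m, hF.pos_of_ne_zero (Metric.ne_of_mem_sphere hm one_ne_zero), hmin⟩

theorem exists_pos_mul_norm_le (hF : IsAsymNorm F) : ∃ c > (0 : ℝ), ∀ y, c * ‖y‖ ≤ F y := by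
  obtain ⟨c, hc, hsphere⟩ := hF.exists_pos_le_on_sphere
  refine ⟨c, hc, fun y => ?_⟩
  rcases eq_or_ne y 0 with rfl | hy
  · simp [hF.map_zero]
  have hny : 0 < ‖y‖ := norm_pos_iff.mpr hy
  have hu : ‖y‖⁻¹ • y ∈ Metric.sphere (0 : En n) 1 := by
    simp [norm_smul, hny.ne']
  have hFy : F y = ‖y‖ * F (‖y‖⁻¹ • y) := by
    rw [← hF.2.2.1 ‖y‖ hny, smul_smul, mul_inv_cancel₀ hny.ne', one_smul]
  rw [hFy, mul_comm]
  exact mul_le_mul_of_nonneg_left (hsphere _ hu) hny.le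

theorem isCompact_unitBall (hF : IsAsymNorm F) : IsCompact {y : En n | F y ≤ 1} := by
  obtain ⟨c, hc, hlow⟩ := hF.exists_pos_mul_norm_le
  refine Metric.isCompact_of_isClosed_isBounded (isClosed_le hF.continuous continuous_const) ?_
  refine (Metric.isBounded_iff_subset_closedBall 0).mpr ⟨1 / c, fun y (hy : F y ≤ 1) => ?_⟩
  rw [Metric.mem_closedBall, dist_zero_right, le_div_iff₀ hc, mul_comm]
  exact (hlow y).trans hy

theorem le_dualNorm (hF : IsAsymNorm F) (α : En n) {y : En n} (hy : F y ≤ 1) :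
    ⟪α, y⟫ ≤ dualNorm F α :=
  le_csSup ((hF.isCompact_unitBall.image (continuous_const.inner (𝕜 := ℝ) continuous_id)).bddAbove)
    ⟨y, hy, rfl⟩

theorem dualNorm_nonneg (hF : IsAsymNorm F) (α : En n) : 0 ≤ dualNorm F α := by
  simpa using hF.le_dualNorm α (y := 0) (by simp [hF.map_zero])

theorem exists_inner_eq_dualNorm (hF : IsAsymNorm F) (α : En n) :
    ∃ y, F y ≤ 1 ∧ ⟪α, y⟫ = dualNorm F α := by
  obtain ⟨y, hy, hmax⟩ := hF.isCompact_unitBall.exists_isMaxOn ⟨0, by simp [hF.map_zero]⟩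
    (continuous_const.inner (𝕜 := ℝ) continuous_id).continuousOn
  refine ⟨y, hy, (hF.le_dualNorm α hy).antisymm ?_⟩
  refine csSup_le ⟨⟪α, 0⟫, 0, by simp [hF.map_zero], rfl⟩ ?_
  rintro _ ⟨z, hz, rfl⟩
  exact hmax hz

theorem inner_le_mul_dualNorm (hF : IsAsymNorm F) (α z : En n) :
    ⟪α, z⟫ ≤ F z * dualNorm F α := by
  rcases eq_or_ne z 0 with rfl | hz
  · simp [hF.map_zero]
  have hFz := hF.pos_of_ne_zero hz
  have hu : F ((F z)⁻¹ • z) ≤ 1 := by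
    rw [hF.2.2.1 _ (inv_pos.mpr hFz), inv_mul_cancel₀ hFz.ne']
  have h := hF.le_dualNorm α hu
  rw [real_inner_smul_right, inv_mul_le_iff₀ hFz] at h
  exact h

theorem inner_sub_sq_le (hF : IsAsymNorm F) (α z : En n) :
    ⟪α, z⟫ - F z ^ 2 ≤ dualNorm F α ^ 2 / 4 := by
  nlinarith [hF.inner_le_mul_dualNorm α z, sq_nonneg (F z - dualNorm F α / 2)]

theorem exists_inner_sub_sq_eq (hF : IsAsymNorm F) (α : En n) :
    ∃ y, ⟪α, y⟫ - F y ^ 2 = dualNorm F α ^ 2 / 4 := by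
  rcases (hF.dualNorm_nonneg α).eq_or_lt with hs | hs
  · exact ⟨0, by simp [← hs, hF.map_zero]⟩
  -- rescale a maximiser `y` of `⟪α, ·⟫` on `{F ≤ 1}` so that `F y = F_*(α) / 2`
  obtain ⟨y, hy, hval⟩ := hF.exists_inner_eq_dualNorm α
  refine ⟨(dualNorm F α / 2) • y, le_antisymm (hF.inner_sub_sq_le α _) ?_⟩
  have hy2 : F y ^ 2 ≤ 1 := by nlinarith [hF.1 y]
  rw [real_inner_smul_right, hval, hF.2.2.1 _ (half_pos hs)]
  nlinarith [mul_le_mul_of_nonneg_left hy2 (sq_nonneg (dualNorm F α))]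

theorem mem_subdiffSq_of_inner_sub_sq_eq (hF : IsAsymNorm F) {α y : En n}
    (hy : ⟪α, y⟫ - F y ^ 2 = dualNorm F α ^ 2 / 4) : α ∈ subdiffSq F y := fun z => by
  rw [inner_sub_right]
  linarith [hF.inner_sub_sq_le α z]

theorem gradient_dualNorm_sq_eq (hF : IsAsymNorm F) {α y g : En n}
    (hg : HasGradientAt (fun β => dualNorm F β ^ 2) g α)
    (hy : ⟪α, y⟫ - F y ^ 2 = dualNorm F α ^ 2 / 4) : g = (4 : ℝ) • y := by
  refine hg.eq_of_isLocalMin_sub_inner (Filter.Eventually.of_forall fun β => ?_)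
  simp only [real_inner_smul_left, real_inner_comm _ y]
  linarith [hF.inner_sub_sq_le β y]

end IsAsymNorm

theorem StronglyConvexWrt.mul_norm_sq_le_inner {n : ℕ} {F G : En n → ℝ}
    (hsc : StronglyConvexWrt F G) {c : ℝ} (hc : 0 ≤ c) (hG : ∀ y, c * ‖y‖ ≤ G y)
    {α₁ α₂ y₁ y₂ : En n} (h₁ : α₁ ∈ subdiffSq F y₁) (h₂ : α₂ ∈ subdiffSq F y₂) :
    2 * c ^ 2 * ‖y₁ - y₂‖ ^ 2 ≤ ⟪α₁ - α₂, y₁ - y₂⟫ := by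
  have hsq : ∀ y, c ^ 2 * ‖y‖ ^ 2 ≤ G y ^ 2 := fun y => by
    rw [← mul_pow]
    exact pow_le_pow_left₀ (by positivity) (hG y) 2
  have hsc₁ := hsc y₁ y₂ α₁ h₁
  have hsc₂ := hsc y₂ y₁ α₂ h₂
  simp only [inner_sub_left, inner_sub_right] at hsc₁ hsc₂ ⊢
  linarith [hsq (y₁ - y₂), norm_sub_rev y₂ y₁ ▸ hsq (y₂ - y₁)]

/-- If `F` is strongly convex with respect to `G`, then the gradient of the squared
dual norm `F_*²` is (globally) Lipschitz. -/
theorem gradient_dual_sq_lipschitz {n : ℕ} (F G : En n → ℝ)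
    (hF : IsAsymNorm F) (hG : IsAsymNorm G) (hsc : StronglyConvexWrt F G)
    (g : En n → En n)
    (hg : ∀ α, HasGradientAt (fun β => (dualNorm F β) ^ 2) (g α) α) :
    ∃ L > (0 : ℝ), ∀ α₁ α₂ : En n, ‖g α₁ - g α₂‖ ≤ L * ‖α₁ - α₂‖ := by
  obtain ⟨c, hc, hGc⟩ := hG.exists_pos_mul_norm_le
  refine ⟨2 / c ^ 2, by positivity, fun α₁ α₂ => ?_⟩
  obtain ⟨y₁, hy₁⟩ := hF.exists_inner_sub_sq_eq α₁
  obtain ⟨y₂, hy₂⟩ := hF.exists_inner_sub_sq_eq α₂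
  have hmono := hsc.mul_norm_sq_le_inner hc.le hGc
    (hF.mem_subdiffSq_of_inner_sub_sq_eq hy₁) (hF.mem_subdiffSq_of_inner_sub_sq_eq hy₂)
  have hy : 2 * c ^ 2 * ‖y₁ - y₂‖ ≤ ‖α₁ - α₂‖ :=
    mul_norm_le_norm_of_mul_norm_sq_le_inner hmono
  rw [hF.gradient_dualNorm_sq_eq (hg α₁) hy₁, hF.gradient_dualNorm_sq_eq (hg α₂) hy₂,
    ← smul_sub, norm_smul, Real.norm_of_nonneg (by norm_num), div_mul_eq_mul_div,
    le_div_iff₀ (by positivity)]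
  nlinarith
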